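/- Let T > 0, ε > 0 and let N be an integer with N > 1/ε. Let q ⊂ (0,1)×(0,T) be an open set whose ε-interior q^ε satisfies the geometric optics condition. Then the graph G_N(q) on the vertex set 𝕀_N, in which two distinct vertices a, b are adjacent if and only if w_{a,b}^N > 0, is connected. -/

import Mathlib

/-!
Write `J = jmapPos N`, so that `k ↦ J k` runs through the cycle `1, …, N, -N, …, -1` and
the square with `x + t ∈ [(k-1)/N, k/N]`, `x - t ∈ [(l-1)/N, l/N]` joins `J k` to `J (1 - l)`.
A point of `q^ε` on a grid line `x ± t = c/N` lies in two squares sharing an edge; their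
diameter is at most `1/N < ε`, so both lie in `q`, and going through their common index
joins `J c` to `J (c + 1)` (up to reflection). Folding the characteristic from `|k|/N`
in direction `-sign k` lands on such a line with `c ≡ ±k (mod 2N)` at the time it meets
`q^ε`, so `J k` and `J (k + 1)` are joined for all `|k| ≤ N`: a full turn of the cycle.
-/

/-- The 2-periodic folding map `s(y) = |y - 2k|`, `k` the integer nearest to `y/2`. -/
noncomputable def fold (y : ℝ) : ℝ := |y - 2 * (round (y / 2) : ℝ)|

/-- A set `A ⊆ [0,1] × (0,T)` satisfies the geometric optics condition if every
characteristic line, reflected according to geometric optics, meets `A`. -/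
def GeoOptics (T : ℝ) (A : Set (ℝ × ℝ)) : Prop :=
  ∀ x0 ∈ Set.Icc (0 : ℝ) 1, ∀ σ : ℝ, (σ = 1 ∨ σ = -1) →
    ∃ t ∈ Set.Ioo (0 : ℝ) T, (fold (x0 + σ * t), t) ∈ A

/-- Euclidean distance on `ℝ × ℝ`. -/
noncomputable def eDist (X Y : ℝ × ℝ) : ℝ :=
  Real.sqrt ((X.1 - Y.1) ^ 2 + (X.2 - Y.2) ^ 2)

/-- The `ε`-interior of a set `q ⊆ ℝ²`: points of `q` at (Euclidean) distance `> ε`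
from the boundary of `q`. -/
def epsInterior (ε : ℝ) (q : Set (ℝ × ℝ)) : Set (ℝ × ℝ) :=
  {X | X ∈ q ∧ ∀ Y ∈ frontier q, ε < eDist X Y}
/-- The interval `I_i^N`: `[(i−1)/N, i/N]` for `i > 0`, `[i/N, (i+1)/N]` for `i < 0`. -/
noncomputable def Ii (N : ℕ) (i : ℤ) : Set ℝ :=
  if 0 < i then Set.Icc (((i : ℝ) - 1) / N) ((i : ℝ) / N)
  else Set.Icc ((i : ℝ) / N) (((i : ℝ) + 1) / N)

/-- The elementary square `C_{(i,j)}^N = {(x,t) : x+t ∈ I_i^N, x−t ∈ I_j^N}`. -/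
noncomputable def elemSq (N : ℕ) (i j : ℤ) : Set (ℝ × ℝ) :=
  {p | p.1 + p.2 ∈ Ii N i ∧ p.1 - p.2 ∈ Ii N j}
/-- The index map `𝔧_N` on positive integers. -/
def jmapPos (N : ℕ) (i : ℤ) : ℤ :=
  if (i - 1) % (2 * (N : ℤ)) < (N : ℤ) then (i - 1) % (2 * (N : ℤ)) + 1
  else (i - 1) % (2 * (N : ℤ)) - 2 * (N : ℤ)

/-- The index map `𝔧_N : ℤ∖{0} → 𝕀_N`, with `𝔧_N(i) = −𝔧_N(−i)` for `i < 0`. -/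
def jmap (N : ℕ) (i : ℤ) : ℤ := if 0 < i then jmapPos N i else -jmapPos N (-i)

/-- The index set `𝕀_N = {−N, …, −1, 1, …, N}`. -/
noncomputable def IN (N : ℕ) : Finset ℤ := (Finset.Icc (-(N : ℤ)) (N : ℤ)).erase 0
/-- Degree `d_a^N`: the number of squares `(i,j) ∈ 𝒞` with `a ∈ {𝔧_N(i), −𝔧_N(j)}`. -/
def degree (N : ℕ) (C : Finset (ℤ × ℤ)) (a : ℤ) : ℕ :=
  (C.filter fun ij => jmap N ij.1 = a ∨ -jmap N ij.2 = a).card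

/-- Weight `w_{a,b}^N`: the number of squares `(i,j) ∈ 𝒞` with `{a,b} = {𝔧_N(i), −𝔧_N(j)}`. -/
def weight (N : ℕ) (C : Finset (ℤ × ℤ)) (a b : ℤ) : ℕ :=
  (C.filter fun ij => ({jmap N ij.1, -jmap N ij.2} : Finset ℤ) = ({a, b} : Finset ℤ)).card

/-- The Laplacian matrix `A_N(q)`: diagonal entries `d_a^N`, off-diagonal entries `−w_{a,b}^N`. -/
def lapMat (N : ℕ) (C : Finset (ℤ × ℤ)) (a b : ℤ) : ℝ :=
  if a = b then (degree N C a : ℝ) else -((weight N C a b : ℝ))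

open Set

theorem IsPreconnected.inter_frontier_nonempty {X : Type*} [TopologicalSpace X] {s t : Set X}
    (hs : IsPreconnected s) (hst : (s ∩ t).Nonempty) (hst' : (s \ t).Nonempty) :
    (s ∩ frontier t).Nonempty := by
  by_contra h
  have hcover : s ⊆ interior t ∪ interior tᶜ := by
    intro x hx
    have hx' : x ∉ frontier t := fun hxt => h ⟨x, hx, hxt⟩
    by_cases hxt : x ∈ t
    · exact Or.inl (self_sdiff_frontier t ▸ ⟨hxt, hx'⟩)
    · exact Or.inr (self_sdiff_frontier tᶜ ▸ ⟨hxt, (frontier_compl t).symm ▸ hx'⟩)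
  have hdisj : Disjoint (interior t) (interior tᶜ) :=
    disjoint_compl_right.mono interior_subset interior_subset
  obtain ⟨x, hxs, hxt⟩ := hst
  obtain ⟨y, hys, hyt⟩ := hst'
  rcases hs.subset_or_subset isOpen_interior isOpen_interior hdisj hcover with hs' | hs'
  · exact hyt (interior_subset (hs' hys))
  · exact interior_subset (hs' hxs) hxt

lemma eDist_le_of_mem_segment {P W Y : ℝ × ℝ} (hY : Y ∈ segment ℝ P W) :
    eDist P Y ≤ eDist P W := by
  rw [segment_eq_image'] at hY
  obtain ⟨θ, ⟨hθ0, hθ1⟩, rfl⟩ := hY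
  have hθ : θ ^ 2 ≤ 1 := pow_le_one₀ hθ0 hθ1
  apply Real.sqrt_le_sqrt
  simp only [Prod.fst_add, Prod.snd_add, Prod.smul_fst, Prod.smul_snd, Prod.fst_sub,
    Prod.snd_sub, smul_eq_mul]
  nlinarith [sq_nonneg (P.1 - W.1), sq_nonneg (P.2 - W.2)]

lemma eDist_le_of_abs_le {P W : ℝ × ℝ} {r : ℝ}
    (h1 : |P.1 + P.2 - (W.1 + W.2)| ≤ r) (h2 : |P.1 - P.2 - (W.1 - W.2)| ≤ r) :
    eDist P W ≤ r := by
  have hr : 0 ≤ r := (abs_nonneg _).trans h1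
  obtain ⟨h1l, h1r⟩ := abs_le.mp h1
  obtain ⟨h2l, h2r⟩ := abs_le.mp h2
  calc eDist P W ≤ Real.sqrt (r ^ 2) := Real.sqrt_le_sqrt (by nlinarith)
    _ = r := Real.sqrt_sq hr

lemma mem_of_eDist_lt {ε : ℝ} {q : Set (ℝ × ℝ)} {P W : ℝ × ℝ} (hP : P ∈ epsInterior ε q)
    (hW : eDist P W < ε) : W ∈ q := by
  by_contra hWq
  obtain ⟨Y, hYseg, hYfr⟩ := (convex_segment P W).isPreconnected.inter_frontier_nonempty
    ⟨P, left_mem_segment ℝ P W, hP.1⟩ ⟨W, right_mem_segment ℝ P W, hWq⟩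
  exact (hP.2 Y hYfr).not_ge ((eDist_le_of_mem_segment hYseg).trans hW.le)

def cellIndex (k : ℤ) : ℤ := if 0 < k then k else k - 1

lemma cellIndex_ne_zero (k : ℤ) : cellIndex k ≠ 0 := by
  unfold cellIndex
  split <;> omega

lemma Ii_cellIndex (N : ℕ) (k : ℤ) :
    Ii N (cellIndex k) = Icc (((k : ℝ) - 1) / N) ((k : ℝ) / N) := by
  unfold Ii cellIndex
  split_ifs <;> first | omega | (push_cast; ring_nf)

lemma div_mem_Ii_cellIndex (N : ℕ) (c : ℤ) : (c : ℝ) / N ∈ Ii N (cellIndex c) := by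
  rw [Ii_cellIndex]
  exact ⟨by gcongr; linarith, le_rfl⟩

lemma div_mem_Ii_cellIndex_add_one (N : ℕ) (c : ℤ) :
    (c : ℝ) / N ∈ Ii N (cellIndex (c + 1)) := by
  rw [Ii_cellIndex]
  push_cast
  exact ⟨by ring_nf; rfl, by gcongr; linarith⟩

lemma exists_mem_Ii_cellIndex {N : ℕ} (hN : 0 < N) (v : ℝ) : ∃ k, v ∈ Ii N (cellIndex k) := by
  have hN' : (0 : ℝ) < N := by exact_mod_cast hN
  refine ⟨⌈v * N⌉, ?_⟩
  rw [Ii_cellIndex, mem_Icc, div_le_iff₀ hN', le_div_iff₀ hN']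
  exact ⟨by linarith [Int.ceil_lt_add_one (v * N)], Int.le_ceil _⟩

lemma abs_sub_le_of_mem_Ii_cellIndex {N : ℕ} {k : ℤ} {x y : ℝ} (hx : x ∈ Ii N (cellIndex k))
    (hy : y ∈ Ii N (cellIndex k)) : |x - y| ≤ 1 / N := by
  rw [Ii_cellIndex] at hx hy
  rw [← Real.dist_eq]
  convert Real.dist_le_of_mem_Icc hx hy using 1
  ring

lemma jmapPos_congr {N : ℕ} {k k' : ℤ} (h : k ≡ k' [ZMOD 2 * N]) :
    jmapPos N k = jmapPos N k' := by
  have h' : (k - 1) % (2 * (N : ℤ)) = (k' - 1) % (2 * (N : ℤ)) := h.sub_right 1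
  rw [jmapPos, jmapPos, h']

lemma jmapPos_of_mem_Icc {N : ℕ} {r : ℤ} (hr : r ∈ Icc 1 (N : ℤ)) : jmapPos N r = r := by
  obtain ⟨hr1, hrN⟩ := hr
  have h : (r - 1) % (2 * (N : ℤ)) = r - 1 := Int.emod_eq_of_lt (by omega) (by omega)
  rw [jmapPos, h, if_pos (by omega)]
  ring

lemma jmapPos_one_sub {N : ℕ} (hN : 0 < N) (k : ℤ) : jmapPos N (1 - k) = -jmapPos N k := by
  have hM : (0 : ℤ) < 2 * N := by positivity
  set s := (k - 1) % (2 * (N : ℤ)) with hs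
  have hs0 : 0 ≤ s := Int.emod_nonneg _ hM.ne'
  have hsM : s < 2 * N := Int.emod_lt_of_pos _ hM
  -- `(-k) % 2N` is the reflection `2N - 1 - s` of `s = (k - 1) % 2N`
  have hr : (1 - k - 1) % (2 * (N : ℤ)) = 2 * N - 1 - s := by
    have hdiv := Int.emod_add_mul_ediv (k - 1) (2 * (N : ℤ))
    rw [← hs] at hdiv
    rw [show 1 - k - 1 = (2 * N - 1 - s) + 2 * N * (-((k - 1) / (2 * N)) - 1) by
      linear_combination hdiv, Int.add_mul_emod_self_left]
    exact Int.emod_eq_of_lt (by omega) (by omega)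
  rw [jmapPos, jmapPos, hr, ← hs]
  split_ifs <;> omega

lemma jmap_cellIndex {N : ℕ} (hN : 0 < N) (k : ℤ) : jmap N (cellIndex k) = jmapPos N k := by
  by_cases hk : 0 < k
  · rw [cellIndex, if_pos hk, jmap, if_pos hk]
  · rw [cellIndex, if_neg hk, jmap, if_neg (by omega), neg_sub, jmapPos_one_sub hN, neg_neg]

lemma jmapPos_mem_IN {N : ℕ} (hN : 0 < N) (k : ℤ) : jmapPos N k ∈ IN N := by
  have hM : (0 : ℤ) < 2 * N := by positivity
  have h0 := Int.emod_nonneg (k - 1) hM.ne'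
  have h1 := Int.emod_lt_of_pos (k - 1) hM
  simp only [IN, Finset.mem_erase, Finset.mem_Icc, jmapPos]
  split_ifs <;> omega

lemma exists_jmapPos_eq {N : ℕ} {a : ℤ} (ha : a ∈ IN N) :
    ∃ k ∈ Icc (1 - (N : ℤ)) N, jmapPos N k = a := by
  simp only [IN, Finset.mem_erase, Finset.mem_Icc] at ha
  obtain ⟨ha0, haN, hNa⟩ := ha
  rcases lt_or_gt_of_ne ha0 with hneg | hpos
  · refine ⟨1 + a, ⟨by omega, by omega⟩, ?_⟩
    rw [show 1 + a = 1 - (-a) by ring, jmapPos_one_sub (by omega),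
      jmapPos_of_mem_Icc ⟨by omega, by omega⟩, neg_neg]
  · exact ⟨a, ⟨by omega, hNa⟩, jmapPos_of_mem_Icc ⟨hpos, hNa⟩⟩

def weightGraph (N : ℕ) (C : Finset (ℤ × ℤ)) : SimpleGraph ℤ where
  Adj u v := u ∈ IN N ∧ v ∈ IN N ∧ u ≠ v ∧ 0 < weight N C u v
  symm := ⟨fun _ _ ⟨hu, hv, huv, hw⟩ => ⟨hv, hu, huv.symm, by rwa [weight, Finset.pair_comm]⟩⟩
  loopless := ⟨fun _ h => h.2.2.1 rfl⟩

lemma weightGraph_reachable_of_weight_pos {N : ℕ} {C : Finset (ℤ × ℤ)} {a b : ℤ}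
    (ha : a ∈ IN N) (hb : b ∈ IN N) (hw : 0 < weight N C a b) :
    (weightGraph N C).Reachable a b := by
  by_cases hab : a = b
  · exact hab ▸ SimpleGraph.Reachable.refl a
  · exact SimpleGraph.Adj.reachable (G := weightGraph N C) ⟨ha, hb, hab, hw⟩

lemma weight_pos_of_mem {N : ℕ} {C : Finset (ℤ × ℤ)} {i j : ℤ} (h : (i, j) ∈ C) :
    0 < weight N C (jmap N i) (-jmap N j) :=
  Finset.card_pos.mpr ⟨(i, j), Finset.mem_filter.mpr ⟨h, rfl⟩⟩

lemma weightGraph_reachable_of_cellIndex_mem {N : ℕ} (hN : 0 < N) {C : Finset (ℤ × ℤ)}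
    {k l : ℤ} (h : (cellIndex k, cellIndex l) ∈ C) :
    (weightGraph N C).Reachable (jmapPos N k) (jmapPos N (1 - l)) := by
  have hw := weight_pos_of_mem (N := N) h
  rw [jmap_cellIndex hN, jmap_cellIndex hN, ← jmapPos_one_sub hN] at hw
  exact weightGraph_reachable_of_weight_pos (jmapPos_mem_IN hN _) (jmapPos_mem_IN hN _) hw

lemma SimpleGraph.reachable_of_reachable_succ {V : Type*} {G : SimpleGraph V} {f : ℤ → V}
    {a b : ℤ} (h : ∀ k ∈ Ico a b, G.Reachable (f k) (f (k + 1))) :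
    ∀ k ∈ Icc a b, G.Reachable (f a) (f k) := by
  rintro k ⟨hak, hkb⟩
  induction k, hak using Int.leInduction with
  | base => rfl
  | succ k hak ih => exact (ih (by omega)).trans (h k ⟨hak, by omega⟩)

section Squares

variable {ε : ℝ} {N : ℕ} {q : Set (ℝ × ℝ)} {C : Finset (ℤ × ℤ)}

lemma cellIndex_mem_of_mem_epsInterior
    (hC : ∀ ij : ℤ × ℤ, ij ∈ C ↔ (ij.1 ≠ 0 ∧ ij.2 ≠ 0 ∧ interior (elemSq N ij.1 ij.2) ⊆ q))
    (hNε : 1 / (N : ℝ) < ε) {P : ℝ × ℝ} (hP : P ∈ epsInterior ε q) {k l : ℤ}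
    (hk : P.1 + P.2 ∈ Ii N (cellIndex k)) (hl : P.1 - P.2 ∈ Ii N (cellIndex l)) :
    (cellIndex k, cellIndex l) ∈ C := by
  refine (hC _).mpr ⟨cellIndex_ne_zero k, cellIndex_ne_zero l, fun W hW => ?_⟩
  obtain ⟨hWk, hWl⟩ := interior_subset hW
  refine mem_of_eDist_lt hP (lt_of_le_of_lt ?_ hNε)
  exact eDist_le_of_abs_le (abs_sub_le_of_mem_Ii_cellIndex hk hWk)
    (abs_sub_le_of_mem_Ii_cellIndex hl hWl)

lemma weightGraph_reachable_of_add_eq (hN : 0 < N)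
    (hC : ∀ ij : ℤ × ℤ, ij ∈ C ↔ (ij.1 ≠ 0 ∧ ij.2 ≠ 0 ∧ interior (elemSq N ij.1 ij.2) ⊆ q))
    (hNε : 1 / (N : ℝ) < ε) {p t : ℝ} (hP : (p, t) ∈ epsInterior ε q) {c m : ℤ}
    (hc : p + t = c / N) (hcm : c ≡ m [ZMOD 2 * N]) :
    (weightGraph N C).Reachable (jmapPos N m) (jmapPos N (m + 1)) := by
  obtain ⟨l, hl⟩ := exists_mem_Ii_cellIndex hN (p - t)
  have h₁ := cellIndex_mem_of_mem_epsInterior hC hNε hP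
    (hc ▸ div_mem_Ii_cellIndex N c) hl
  have h₂ := cellIndex_mem_of_mem_epsInterior hC hNε hP
    (hc ▸ div_mem_Ii_cellIndex_add_one N c) hl
  rw [← jmapPos_congr hcm, ← jmapPos_congr (hcm.add_right 1)]
  exact (weightGraph_reachable_of_cellIndex_mem hN h₁).trans
    (weightGraph_reachable_of_cellIndex_mem hN h₂).symm

lemma weightGraph_reachable_of_sub_eq (hN : 0 < N)
    (hC : ∀ ij : ℤ × ℤ, ij ∈ C ↔ (ij.1 ≠ 0 ∧ ij.2 ≠ 0 ∧ interior (elemSq N ij.1 ij.2) ⊆ q))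
    (hNε : 1 / (N : ℝ) < ε) {p t : ℝ} (hP : (p, t) ∈ epsInterior ε q) {c m : ℤ}
    (hc : p - t = c / N) (hcm : -c ≡ m [ZMOD 2 * N]) :
    (weightGraph N C).Reachable (jmapPos N m) (jmapPos N (m + 1)) := by
  obtain ⟨k, hk⟩ := exists_mem_Ii_cellIndex hN (p + t)
  have h₁ := cellIndex_mem_of_mem_epsInterior hC hNε hP hk
    (hc ▸ div_mem_Ii_cellIndex N c)
  have h₂ := cellIndex_mem_of_mem_epsInterior hC hNε hP hk
    (hc ▸ div_mem_Ii_cellIndex_add_one N c)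
  rw [← jmapPos_congr (show 1 - (c + 1) ≡ m [ZMOD 2 * N] by simpa [sub_add_cancel_left] using hcm),
    ← jmapPos_congr (show 1 - c ≡ m + 1 [ZMOD 2 * N] by
      simpa [sub_eq_neg_add, add_comm] using hcm.add_right 1)]
  exact (weightGraph_reachable_of_cellIndex_mem hN h₂).symm.trans
    (weightGraph_reachable_of_cellIndex_mem hN h₁)

end Squares

lemma fold_eq (y : ℝ) : ∃ k : ℤ, fold y = y - 2 * k ∨ fold y = 2 * k - y :=
  ⟨round (y / 2), (abs_choice _).imp id fun h => h.trans (neg_sub _ _)⟩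

lemma weightGraph_reachable_succ_of_geoOptics {ε : ℝ} {N : ℕ} {q : Set (ℝ × ℝ)}
    {C : Finset (ℤ × ℤ)} (hN : 0 < N)
    (hC : ∀ ij : ℤ × ℤ, ij ∈ C ↔ (ij.1 ≠ 0 ∧ ij.2 ≠ 0 ∧ interior (elemSq N ij.1 ij.2) ⊆ q))
    (hNε : 1 / (N : ℝ) < ε) {T : ℝ} (hgoc : GeoOptics T (epsInterior ε q)) {k : ℤ}
    (hk : k ∈ Icc (-(N : ℤ)) N) :
    (weightGraph N C).Reachable (jmapPos N k) (jmapPos N (k + 1)) := by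
  have hN' : (0 : ℝ) < N := by exact_mod_cast hN
  obtain ⟨hkl, hkr⟩ := hk
  rcases le_or_gt 0 k with hk0 | hk0
  · obtain ⟨t, -, hP⟩ := hgoc (k / N)
      ⟨by positivity, (div_le_one hN').mpr (by exact_mod_cast hkr)⟩ (-1) (Or.inr rfl)
    obtain ⟨e, he | he⟩ := fold_eq (k / N + -1 * t)
    · refine weightGraph_reachable_of_add_eq hN hC hNε hP (c := k - 2 * e * N) ?_
        (Int.modEq_iff_dvd.mpr ⟨e, by ring⟩)
      rw [he]; push_cast; field_simp; ring
    · refine weightGraph_reachable_of_sub_eq hN hC hNε hP (c := 2 * e * N - k) ?_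
        (Int.modEq_iff_dvd.mpr ⟨e, by ring⟩)
      rw [he]; push_cast; field_simp; ring
  · obtain ⟨t, -, hP⟩ := hgoc ((-k : ℤ) / N)
      ⟨div_nonneg (by exact_mod_cast (by omega : 0 ≤ -k)) hN'.le,
        (div_le_one hN').mpr (by exact_mod_cast (by omega : -k ≤ (N : ℤ)))⟩
      1 (Or.inl rfl)
    obtain ⟨e, he | he⟩ := fold_eq ((-k : ℤ) / N + 1 * t)
    · refine weightGraph_reachable_of_sub_eq hN hC hNε hP (c := -k - 2 * e * N) ?_
        (Int.modEq_iff_dvd.mpr ⟨-e, by ring⟩)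
      rw [he]; push_cast; field_simp; ring
    · refine weightGraph_reachable_of_add_eq hN hC hNε hP (c := 2 * e * N + k) ?_
        (Int.modEq_iff_dvd.mpr ⟨-e, by ring⟩)
      rw [he]; push_cast; field_simp; ring

theorem graph_connected_general (T ε : ℝ) (hε : 0 < ε)
    (N : ℕ) (hN : 1 / ε < (N : ℝ))
    (q : Set (ℝ × ℝ))
    (hgoc : GeoOptics T (epsInterior ε q))
    (C : Finset (ℤ × ℤ))
    (hC : ∀ ij : ℤ × ℤ, ij ∈ C ↔
      (ij.1 ≠ 0 ∧ ij.2 ≠ 0 ∧ interior (elemSq N ij.1 ij.2) ⊆ q)) :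
    ∀ a ∈ IN N, ∀ b ∈ IN N,
      Relation.ReflTransGen
        (fun u v => u ∈ IN N ∧ v ∈ IN N ∧ u ≠ v ∧ 0 < weight N C u v) a b := by
  have hNpos : (0 : ℝ) < N := (one_div_pos.mpr hε).trans hN
  have hN0 : 0 < N := by exact_mod_cast hNpos
  have hNε : 1 / (N : ℝ) < ε := (one_div_lt hε hNpos).mp hN
  have hchain := SimpleGraph.reachable_of_reachable_succ (a := -(N : ℤ)) (b := N) fun k hk =>
    weightGraph_reachable_succ_of_geoOptics hN0 hC hNε hgoc (Ico_subset_Icc_self hk)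
  have hIcc : Icc (1 - (N : ℤ)) N ⊆ Icc (-N) N := Icc_subset_Icc (by omega) le_rfl
  intro a ha b hb
  obtain ⟨k, hk, rfl⟩ := exists_jmapPos_eq ha
  obtain ⟨l, hl, rfl⟩ := exists_jmapPos_eq hb
  exact (SimpleGraph.reachable_iff_reflTransGen _ _).mp
    ((hchain k (hIcc hk)).symm.trans (hchain l (hIcc hl)))

/-- Lemma 2.9: if the `ε`-interior of `q` satisfies the geometric
optics condition and `N > 1/ε`, then the graph `G_N(q)` on the vertex set `𝕀_N`, with
`a ∼ b` iff `w_{a,b}^N > 0`, is connected: any two vertices are joined by a path. -/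
theorem graph_connected (T ε : ℝ) (hT : 0 < T) (hε : 0 < ε)
    (N : ℕ) (hN : 1 / ε < (N : ℝ))
    (q : Set (ℝ × ℝ)) (hq : IsOpen q)
    (hsub : q ⊆ Set.Ioo (0 : ℝ) 1 ×ˢ Set.Ioo (0 : ℝ) T)
    (hgoc : GeoOptics T (epsInterior ε q))
    (C : Finset (ℤ × ℤ))
    (hC : ∀ ij : ℤ × ℤ, ij ∈ C ↔
      (ij.1 ≠ 0 ∧ ij.2 ≠ 0 ∧ interior (elemSq N ij.1 ij.2) ⊆ q)) :
    ∀ a ∈ IN N, ∀ b ∈ IN N,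
      Relation.ReflTransGen
        (fun u v => u ∈ IN N ∧ v ∈ IN N ∧ u ≠ v ∧ 0 < weight N C u v) a b :=
  graph_connected_general T ε hε N hN q hgoc C hC
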